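/- Let (a_n) be an arithmetic sequence with ratios q_n and x ∈ 𝕋 with canonical representation x = Σ c_n/a_n. If x is a topological s-torsion element (a_n x → 0 statistically in 𝕋) and A ⊆ supp(x) is a q-divergent set with positive upper density, then there exists B ⊆ A with d(A \ B) = 0 such that lim_{n ∈ B} c_n/q_n = 0 in 𝕋. -/

import Mathlib

open Filter Topology Set

/-- Upper natural density of a set of naturals. -/
noncomputable def upperDensity (A : Set ℕ) : ℝ :=
  Filter.limsup (fun n => (Nat.card ↥(A ∩ Set.Iio n) : ℝ) / n) Filter.atTop

/-- `A` has natural density `δ`. -/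
def HasDensity (A : Set ℕ) (δ : ℝ) : Prop :=
  Filter.Tendsto (fun n => (Nat.card ↥(A ∩ Set.Iio n) : ℝ) / n) Filter.atTop (nhds δ)

/-- Statistical convergence of a real sequence. -/
def StatTendsto (x : ℕ → ℝ) (ξ : ℝ) : Prop :=
  ∀ ε : ℝ, 0 < ε → HasDensity {n | ε ≤ |x n - ξ|} 0

/-- An arithmetic sequence: `a 0 = 1 < a 1 < a 2 < ⋯` and `a n ∣ a (n+1)`. -/
def IsArithmeticSeq (a : ℕ → ℕ) : Prop :=
  a 0 = 1 ∧ StrictMono a ∧ ∀ n, a n ∣ a (n + 1)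

/-- The ratio `q n = a n / a (n-1)` as a real number. -/
noncomputable def qr (a : ℕ → ℕ) (n : ℕ) : ℝ := (a n : ℝ) / (a (n - 1) : ℝ)

/-- `(c n)` is a canonical representation sequence w.r.t. `(a n)`:
`0 ≤ c n < q n` and `c n < q n - 1` for infinitely many `n`. -/
def IsCanonicalRep (a : ℕ → ℕ) (c : ℕ → ℕ) : Prop :=
  c 0 = 0 ∧ (∀ n, 1 ≤ n → c n < a n / a (n - 1)) ∧
    (∀ N, ∃ n, N ≤ n ∧ 1 ≤ n ∧ c n + 1 < a n / a (n - 1))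

/-- Support of (the canonical representation of) `x`. -/
def suppRep (c : ℕ → ℕ) : Set ℕ := {n | 1 ≤ n ∧ c n ≠ 0}

/-- `supp_q(x) = {n : c n = q n - 1}`. -/
def suppqRep (a c : ℕ → ℕ) : Set ℕ := {n | 1 ≤ n ∧ c n + 1 = a n / a (n - 1)}

/-- A set `S ⊆ ℕ` is `q`-bounded if `(q n)` is bounded on `S`. -/
def QBounded (a : ℕ → ℕ) (S : Set ℕ) : Prop := ∃ M, ∀ n ∈ S, a n / a (n - 1) ≤ M

/-- A set `S ⊆ ℕ` is `q`-divergent if `q n → ∞` along `n ∈ S`. -/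
def QDivergent (a : ℕ → ℕ) (S : Set ℕ) : Prop :=
  Filter.Tendsto (fun n => a n / a (n - 1)) (Filter.atTop ⊓ Filter.principal S) Filter.atTop

/-- Statistical convergence in a topological space, via neighborhoods. -/
def StatNhdTendsto {α : Type*} [TopologicalSpace α] (y : ℕ → α) (ℓ : α) : Prop :=
  ∀ U ∈ nhds ℓ, HasDensity {n | y n ∉ U} 0

/-!
Write `x = Σ c_k / a_k` and split the series at `n`: multiplying by `a (n-1)`, the terms with
`k < n` become integers, the term `k = n` becomes `c n / q n`, and the tail is at most
`a (n-1) / a n = 1 / q n`. Hence `c n / q n` lies within `1 / q n` of `a (n-1) • x` in `𝕋`.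
Statistical convergence `a n • x → 0` gives ordinary convergence off a set `D` of density zero
(density-zero sets form a P-ideal), so on `B = A \ (D + 1)` both `a (n-1) • x` and `1 / q n`
tend to `0`.
-/

section Density

lemma HasDensity.of_card_le {s t : Set ℕ} (ht : HasDensity t 0)
    (h : ∀ n, Nat.card ↥(s ∩ Iio n) ≤ Nat.card ↥(t ∩ Iio n)) : HasDensity s 0 :=
  squeeze_zero (fun _ => by positivity)
    (fun n => div_le_div_of_nonneg_right (by exact_mod_cast h n) n.cast_nonneg) ht

lemma HasDensity.mono {s t : Set ℕ} (ht : HasDensity t 0) (h : s ⊆ t) : HasDensity s 0 :=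
  ht.of_card_le fun n =>
    Nat.card_mono ((finite_Iio n).subset inter_subset_right) (inter_subset_inter_left _ h)

lemma HasDensity.image_of_le {D : Set ℕ} {f : ℕ → ℕ} (hD : HasDensity D 0)
    (hf : ∀ n, n ≤ f n) : HasDensity (f '' D) 0 :=
  hD.of_card_le fun n => by
    have hsub : f '' D ∩ Iio n ⊆ f '' (D ∩ Iio n) := by
      rintro _ ⟨⟨k, hk, rfl⟩, hkn⟩
      exact ⟨k, ⟨hk, (hf k).trans_lt hkn⟩, rfl⟩
    exact (Nat.card_mono (((finite_Iio n).subset inter_subset_right).image f) hsub).trans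
      (Nat.card_image_le ((finite_Iio n).subset inter_subset_right))

lemma hasDensity_iUnion_inter_Ici {E : ℕ → Set ℕ} (hE : Monotone E) {φ : ℕ → ℕ}
    (hφ : StrictMono φ)
    (hφE : ∀ k, ∀ m, φ k ≤ m → (Nat.card ↥(E k ∩ Iio m) : ℝ) / m < 1 / ((k : ℝ) + 1)) :
    HasDensity (⋃ k, E k ∩ Ici (φ k)) 0 := by
  refine tendsto_order.2 ⟨fun ε hε => Eventually.of_forall fun m => hε.trans_le (by positivity),
    fun ε hε => ?_⟩
  obtain ⟨k, hk⟩ := exists_nat_one_div_lt hε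
  filter_upwards [eventually_ge_atTop (φ k)] with m hm
  have hkm : k ≤ m := (hφ.id_le k).trans hm
  -- below `m` the union only meets pieces `E i` with `i ≤ j`, all contained in `E j`
  set j := Nat.findGreatest (fun i => φ i ≤ m) m
  have hφj : φ j ≤ m := Nat.findGreatest_spec (P := fun i => φ i ≤ m) hkm hm
  have hkj : k ≤ j := Nat.le_findGreatest (P := fun i => φ i ≤ m) hkm hm
  have hsub : (⋃ i, E i ∩ Ici (φ i)) ∩ Iio m ⊆ E j ∩ Iio m := by
    rintro n ⟨hn, hnm⟩
    obtain ⟨i, hni, hφi⟩ := mem_iUnion.1 hn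
    refine ⟨hE ?_ hni, hnm⟩
    by_contra! hji
    have hφim : φ i ≤ m := (hφi.trans_lt hnm).le
    exact Nat.findGreatest_is_greatest hji ((hφ.id_le i).trans hφim) hφim
  have hcard := Nat.card_mono ((finite_Iio m).subset inter_subset_right) hsub
  calc (Nat.card ↥((⋃ i, E i ∩ Ici (φ i)) ∩ Iio m) : ℝ) / m
      ≤ (Nat.card ↥(E j ∩ Iio m) : ℝ) / m :=
        div_le_div_of_nonneg_right (by exact_mod_cast hcard) m.cast_nonneg
    _ < 1 / ((j : ℝ) + 1) := hφE j m hφj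
    _ ≤ 1 / ((k : ℝ) + 1) := by gcongr
    _ < ε := hk

lemma exists_hasDensity_zero_eventually_subset {E : ℕ → Set ℕ} (hE : Monotone E)
    (hE₀ : ∀ k, HasDensity (E k) 0) :
    ∃ D, HasDensity D 0 ∧ ∀ k, ∀ᶠ n in atTop, n ∈ E k → n ∈ D := by
  obtain ⟨φ, hφ, hφE⟩ := extraction_forall_of_eventually fun k =>
    eventually_forall_ge_atTop.2
      ((hE₀ k).eventually_lt_const (show (0 : ℝ) < 1 / ((k : ℝ) + 1) by positivity))
  refine ⟨⋃ k, E k ∩ Ici (φ k), hasDensity_iUnion_inter_Ici hE hφ hφE, fun k => ?_⟩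
  filter_upwards [eventually_ge_atTop (φ k)] with n hn hnE
  exact mem_iUnion.2 ⟨k, hnE, hn⟩

theorem StatNhdTendsto.exists_hasDensity_zero_tendsto {α : Type*} [TopologicalSpace α]
    {y : ℕ → α} {ℓ : α} [(𝓝 ℓ).IsCountablyGenerated] (h : StatNhdTendsto y ℓ) :
    ∃ D, HasDensity D 0 ∧ Tendsto y (atTop ⊓ 𝓟 Dᶜ) (𝓝 ℓ) := by
  obtain ⟨U, hU⟩ := (𝓝 ℓ).exists_antitone_basis
  obtain ⟨D, hD, hED⟩ := exists_hasDensity_zero_eventually_subset (E := fun k => {n | y n ∉ U k})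
    (fun _ _ hkl _ hn hnU => hn (hU.antitone hkl hnU)) (fun k => h _ (hU.mem k))
  refine ⟨D, hD, hU.1.tendsto_right_iff.2 fun k _ => ?_⟩
  rw [eventually_inf_principal]
  filter_upwards [hED k] with n hn hnD
  by_contra hnU
  exact hnD (hn hnU)

end Density

section Telescoping

variable {f g : ℕ → ℝ}

lemma sum_range_le_of_le_sub_succ (hg : ∀ k, 0 ≤ g k) (h : ∀ k, f k ≤ g k - g (k + 1))
    (K : ℕ) : ∑ k ∈ Finset.range K, f k ≤ g 0 :=
  (Finset.sum_le_sum fun k _ => h k).trans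
    ((Finset.sum_range_sub' g K).le.trans (sub_le_self _ (hg K)))

lemma summable_of_le_sub_succ (hf : ∀ k, 0 ≤ f k) (hg : ∀ k, 0 ≤ g k)
    (h : ∀ k, f k ≤ g k - g (k + 1)) : Summable f :=
  summable_of_sum_range_le hf (sum_range_le_of_le_sub_succ hg h)

lemma tsum_le_of_le_sub_succ (hf : ∀ k, 0 ≤ f k) (hg : ∀ k, 0 ≤ g k)
    (h : ∀ k, f k ≤ g k - g (k + 1)) : ∑' k, f k ≤ g 0 :=
  (summable_of_le_sub_succ hf hg h).tsum_le_of_sum_range_le (sum_range_le_of_le_sub_succ hg h)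

end Telescoping

namespace IsArithmeticSeq

variable {a : ℕ → ℕ}

lemma pos (ha : IsArithmeticSeq a) (n : ℕ) : 0 < a n :=
  Nat.one_pos.trans_le (ha.1 ▸ ha.2.1.monotone n.zero_le)

lemma dvd_of_le (ha : IsArithmeticSeq a) {i j : ℕ} (hij : i ≤ j) : a i ∣ a j := by
  induction j, hij using Nat.le_induction with
  | base => rfl
  | succ j _ ih => exact ih.trans (ha.2.2 j)

lemma qr_eq (ha : IsArithmeticSeq a) (n : ℕ) : qr a n = ((a n / a (n - 1) : ℕ) : ℝ) :=
  (Nat.cast_div (ha.dvd_of_le (n.sub_le 1)) (Nat.cast_ne_zero.2 (ha.pos _).ne')).symm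

lemma tendsto_qr {A : Set ℕ} (ha : IsArithmeticSeq a) (hA : QDivergent a A) :
    Tendsto (qr a) (atTop ⊓ 𝓟 A) atTop := by
  rw [show qr a = _ from funext ha.qr_eq]
  exact tendsto_natCast_atTop_atTop.comp hA

lemma exists_natCast_eq_mul_sum_range (ha : IsArithmeticSeq a) (c : ℕ → ℕ) (n : ℕ) :
    ∃ N : ℕ, (a n : ℝ) * ∑ k ∈ Finset.range (n + 1), (c k : ℝ) / a k = N := by
  refine ⟨∑ k ∈ Finset.range (n + 1), c k * (a n / a k), ?_⟩
  push_cast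
  rw [Finset.mul_sum]
  refine Finset.sum_congr rfl fun k hk => ?_
  have hkn : k ≤ n := Nat.lt_succ_iff.1 (Finset.mem_range.1 hk)
  rw [Nat.cast_div (ha.dvd_of_le hkn) (Nat.cast_ne_zero.2 (ha.pos k).ne')]
  ring

end IsArithmeticSeq

lemma AddCircle.coe_natCast_eq_zero (m : ℕ) : ((m : ℝ) : AddCircle (1 : ℝ)) = 0 := by
  rw [← nsmul_one, AddCircle.coe_nsmul, AddCircle.coe_period, nsmul_zero]

namespace IsCanonicalRep

variable {a c : ℕ → ℕ}

lemma div_le_inv_sub_inv (ha : IsArithmeticSeq a) (hc : IsCanonicalRep a c) (n : ℕ) :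
    (c (n + 1) : ℝ) / a (n + 1) ≤ (a n : ℝ)⁻¹ - (a (n + 1) : ℝ)⁻¹ := by
  have hq : (a (n + 1) : ℝ) = a n * (a (n + 1) / a n : ℕ) := by
    exact_mod_cast (Nat.mul_div_cancel' (ha.2.2 n)).symm
  have hcq : (c (n + 1) : ℝ) + 1 ≤ (a (n + 1) / a n : ℕ) := by
    exact_mod_cast hc.2.1 (n + 1) n.succ_pos
  have han : (0 : ℝ) < a n := by exact_mod_cast ha.pos n
  have hq₀ : (0 : ℝ) < (a (n + 1) / a n : ℕ) := by linarith [(c (n + 1)).cast_nonneg (α := ℝ)]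
  rw [hq]
  calc (c (n + 1) : ℝ) / (a n * (a (n + 1) / a n : ℕ))
      ≤ (((a (n + 1) / a n : ℕ) : ℝ) - 1) / (a n * (a (n + 1) / a n : ℕ)) := by
        gcongr; linarith
    _ = _ := by field_simp

lemma tail_le_sub_succ (ha : IsArithmeticSeq a) (hc : IsCanonicalRep a c) (n k : ℕ) :
    (c (k + (n + 1)) : ℝ) / a (k + (n + 1)) ≤ (a (k + n) : ℝ)⁻¹ - (a (k + 1 + n) : ℝ)⁻¹ := by
  rw [Nat.add_right_comm k 1 n]
  exact hc.div_le_inv_sub_inv ha (k + n)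

lemma summable (ha : IsArithmeticSeq a) (hc : IsCanonicalRep a c) :
    Summable fun k => (c k : ℝ) / a k :=
  (summable_nat_add_iff 1).1 <| summable_of_le_sub_succ (fun _ => by positivity)
    (fun _ => by positivity) (hc.tail_le_sub_succ ha 0)

lemma tsum_tail_le (ha : IsArithmeticSeq a) (hc : IsCanonicalRep a c) (n : ℕ) :
    ∑' k, (c (k + (n + 1)) : ℝ) / a (k + (n + 1)) ≤ (a n : ℝ)⁻¹ := by
  simpa using tsum_le_of_le_sub_succ (fun _ => by positivity) (fun _ => by positivity)
    (hc.tail_le_sub_succ ha n)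

lemma norm_coe_div_qr_sub_nsmul_le (ha : IsArithmeticSeq a) (hc : IsCanonicalRep a c) (n : ℕ) :
    ‖(((c (n + 1) : ℝ) / qr a (n + 1) : ℝ) : AddCircle (1 : ℝ))
        - a n • ((∑' k, (c k : ℝ) / a k : ℝ) : AddCircle (1 : ℝ))‖ ≤ (qr a (n + 1))⁻¹ := by
  set T := ∑' k, (c (k + (n + 1 + 1)) : ℝ) / a (k + (n + 1 + 1))
  obtain ⟨N, hN⟩ := ha.exists_natCast_eq_mul_sum_range c n
  have hsplit : ∑' k, (c k : ℝ) / a k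
      = ∑ k ∈ Finset.range (n + 1), (c k : ℝ) / a k + (c (n + 1) : ℝ) / a (n + 1) + T := by
    rw [← Finset.sum_range_succ, (hc.summable ha).sum_add_tsum_nat_add]
  have hdigit : (a n : ℝ) * ((c (n + 1) : ℝ) / a (n + 1)) = c (n + 1) / qr a (n + 1) := by
    simp only [qr, Nat.add_sub_cancel]
    field_simp
  have hnsmul : a n • ((∑' k, (c k : ℝ) / a k : ℝ) : AddCircle (1 : ℝ))
      = (((c (n + 1) : ℝ) / qr a (n + 1) : ℝ) : AddCircle (1 : ℝ))
        + ((a n * T : ℝ) : AddCircle (1 : ℝ)) := by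
    rw [← AddCircle.coe_nsmul, nsmul_eq_mul, hsplit, mul_add, mul_add, hN, hdigit,
      AddCircle.coe_add, AddCircle.coe_add, AddCircle.coe_natCast_eq_zero, zero_add]
  have hT₀ : 0 ≤ T := tsum_nonneg fun _ => by positivity
  rw [hnsmul, sub_add_cancel_left, norm_neg]
  calc ‖((a n * T : ℝ) : AddCircle (1 : ℝ))‖ ≤ ‖(a n : ℝ) * T‖ := QuotientAddGroup.norm_mk_le_norm
    _ = a n * T := by rw [Real.norm_of_nonneg (by positivity)]
    _ ≤ a n * (a (n + 1) : ℝ)⁻¹ := by gcongr; exact hc.tsum_tail_le ha (n + 1)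
    _ = (qr a (n + 1))⁻¹ := by rw [qr, Nat.add_sub_cancel, inv_div, div_eq_mul_inv]

end IsCanonicalRep

theorem cq_tendsto_zero_circle_of_sTorsion_general (a c : ℕ → ℕ) (ha : IsArithmeticSeq a)
    (hc : IsCanonicalRep a c) (x : AddCircle (1 : ℝ))
    (hx : x = ((∑' n, (c n : ℝ) / (a n : ℝ) : ℝ) : AddCircle (1 : ℝ)))
    (hs : StatNhdTendsto (fun n => a n • x) (0 : AddCircle (1 : ℝ)))
    (A : Set ℕ) (hqd : QDivergent a A) :
    ∃ B ⊆ A, HasDensity (A \ B) 0 ∧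
      Filter.Tendsto (fun n => (((c n : ℝ) / qr a n : ℝ) : AddCircle (1 : ℝ)))
        (Filter.atTop ⊓ Filter.principal B) (nhds 0) := by
  obtain ⟨D, hD, hxD⟩ := hs.exists_hasDensity_zero_tendsto
  set B := A \ Nat.succ '' D
  refine ⟨B, sdiff_subset, (hD.image_of_le Nat.le_succ).mono ?_, ?_⟩
  · rw [sdiff_sdiff_right_self]
    exact inter_subset_right
  have hpred : Tendsto (· - 1) (atTop ⊓ 𝓟 B) (atTop ⊓ 𝓟 Dᶜ) := by
    refine tendsto_inf.2 ⟨(tendsto_sub_atTop_nat 1).mono_left inf_le_left, tendsto_principal.2 ?_⟩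
    rw [eventually_inf_principal]
    filter_upwards [eventually_ge_atTop 1] with n hn hnB hnD
    exact hnB.2 ⟨n - 1, hnD, Nat.sub_add_cancel hn⟩
  have hqinv : Tendsto (fun n => (qr a n)⁻¹) (atTop ⊓ 𝓟 B) (𝓝 0) :=
    tendsto_inv_atTop_zero.comp
      ((ha.tendsto_qr hqd).mono_left (inf_le_inf_left _ (principal_mono.2 sdiff_subset)))
  have hclose : Tendsto (fun n => (((c n : ℝ) / qr a n : ℝ) : AddCircle (1 : ℝ)) - a (n - 1) • x)
      (atTop ⊓ 𝓟 B) (𝓝 0) := by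
    refine tendsto_zero_iff_norm_tendsto_zero.2
      (squeeze_zero' (Eventually.of_forall fun _ => norm_nonneg _) ?_ hqinv)
    filter_upwards [(eventually_ge_atTop 1).filter_mono inf_le_left] with n hn
    obtain ⟨m, rfl⟩ := Nat.exists_eq_add_of_le' hn
    simpa [hx] using hc.norm_coe_div_qr_sub_nsmul_le ha m
  simpa using hclose.add (hxD.comp hpred)

/-- If `x` is a topological `s`-torsion element and `A ⊆ supp(x)` is a
`q`-divergent set of positive upper density, then `c_n/q_n → 0` in `𝕋` along
some `B ⊆ A` with `d(A \ B) = 0`. -/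
theorem cq_tendsto_zero_circle_of_sTorsion (a c : ℕ → ℕ) (ha : IsArithmeticSeq a)
    (hc : IsCanonicalRep a c) (x : AddCircle (1 : ℝ))
    (hx : x = ((∑' n, (c n : ℝ) / (a n : ℝ) : ℝ) : AddCircle (1 : ℝ)))
    (hs : StatNhdTendsto (fun n => a n • x) (0 : AddCircle (1 : ℝ)))
    (A : Set ℕ) (hAsupp : A ⊆ suppRep c) (hA : 0 < upperDensity A)
    (hqd : QDivergent a A) :
    ∃ B ⊆ A, HasDensity (A \ B) 0 ∧
      Filter.Tendsto (fun n => (((c n : ℝ) / qr a n : ℝ) : AddCircle (1 : ℝ)))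
        (Filter.atTop ⊓ Filter.principal B) (nhds 0) :=
  cq_tendsto_zero_circle_of_sTorsion_general a c ha hc x hx hs A hqd
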